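/- Let p : 𝔅 → G be an upper semicontinuous Banach bundle over a second countable locally compact Hausdorff space G. Let φ : G → ℝ be a Borel function for which there is a sequence (φ_n) of nonnegative functions in C_c(G) with φ_n(x) decreasing to φ(x) for every x ∈ G. Fix n and suppose f ∈ Σ_c(G;𝔅) satisfies ‖f(x)‖ ≤ φ_n(x) for all x. Then there exist f₁, f₂ ∈ Σ_c(G;𝔅) with f = f₁ + f₂, ‖f₁(x)‖ ≤ φ(x) for all x, and ‖f₂(x)‖ ≤ φ_n(x) − φ(x) for all x. -/

import Mathlib

/-!
Put `s := φ / φₙ`, which is `0` where `φₙ` vanishes (`a / 0 = 0`). Since `0 ≤ φ ≤ φₙ`, `s`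
takes values in `[0, 1]`, and `f₁ := s • f`, `f₂ := (1 - s) • f` satisfy the norm bounds.
Moreover `s` is the pointwise limit of the continuous `[0, 1]`-valued functions
`φₙ₊ₖ / max φₙ (1 / (k + 1))`, and multiplying a section in `Σ_c` by a bounded pointwise limit
of continuous scalar functions stays in `Σ_c`: by (B1) a convergent sequence in the total space
is eventually bounded in norm, so (B2)–(B4) make scalar multiplication jointly continuous
along it.
-/

open MeasureTheory Filter Topology Set

/-- An upper semicontinuous Banach bundle over a topological space `X`, with fibres
`Fib x` (each a complex Banach space), total space `(x : X) × Fib x` and bundle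
projection `Sigma.fst`.  The axioms are (B1)–(B4) of the paper, together with the
standing assumption that the bundle has enough sections. -/
structure USCBanachBundle (X : Type) [TopologicalSpace X] (Fib : X → Type)
    [∀ x, NormedAddCommGroup (Fib x)] [∀ x, NormedSpace ℂ (Fib x)]
    [∀ x, CompleteSpace (Fib x)] : Type where
  /-- the topology on the total space `Σ x, Fib x` -/
  topTotal : TopologicalSpace ((x : X) × Fib x)
  /-- the projection is continuous -/
  continuous_proj : @Continuous ((x : X) × Fib x) X topTotal inferInstance
    fun b => b.1
  /-- the projection is an open map -/
  isOpenMap_proj : @IsOpenMap ((x : X) × Fib x) X topTotal inferInstance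
    fun b => b.1
  /-- (B1): the norm is upper semicontinuous on the total space -/
  isOpen_norm_lt : ∀ r : ℝ, @IsOpen ((x : X) × Fib x) topTotal { b | ‖b.2‖ < r }
  /-- (B2): addition is continuous on pairs lying in a common fibre -/
  continuous_add :
    @Continuous { q : ((x : X) × Fib x) × ((x : X) × Fib x) // q.1.1 = q.2.1 }
      ((x : X) × Fib x)
      (@instTopologicalSpaceSubtype _ _
        (@instTopologicalSpaceProd _ _ topTotal topTotal))
      topTotal
      (fun q => ⟨q.1.1.1, q.1.1.2 + cast (congrArg Fib q.2.symm) q.1.2.2⟩)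
  /-- (B3): scalar multiplication is continuous -/
  continuous_smul : ∀ c : ℂ,
    @Continuous ((x : X) × Fib x) ((x : X) × Fib x) topTotal topTotal
      fun b => ⟨b.1, c • b.2⟩
  /-- (B4): if `p (a i) → x` and `‖a i‖ → 0` then `a i → 0ₓ` (stated for filters,
  which is equivalent to the statement for nets) -/
  tendsto_zero : ∀ {ι : Type} (l : Filter ι) (a : ι → (x : X) × Fib x) (x : X),
    Filter.Tendsto (fun i => (a i).1) l (nhds x) →
    Filter.Tendsto (fun i => ‖(a i).2‖) l (nhds (0 : ℝ)) →
    Filter.Tendsto a l (@nhds _ topTotal (⟨x, 0⟩ : (x : X) × Fib x))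
  /-- the bundle has enough sections -/
  enough_sections : ∀ (x : X) (v : Fib x), ∃ f : ∀ y, Fib y,
    (@Continuous X ((x : X) × Fib x) inferInstance topTotal fun y => ⟨y, f y⟩) ∧
      f x = v

namespace USCBanachBundle

variable {X : Type} [TopologicalSpace X] {Fib : X → Type}
  [∀ x, NormedAddCommGroup (Fib x)] [∀ x, NormedSpace ℂ (Fib x)]
  [∀ x, CompleteSpace (Fib x)]

/-- `f` is a continuous (global) section of the bundle `B`. -/
def IsContSection (B : USCBanachBundle X Fib) (f : ∀ x, Fib x) : Prop :=
  @Continuous X ((x : X) × Fib x) inferInstance B.topTotal fun x => ⟨x, f x⟩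

/-- membership in `Γ_c(X;𝔅)`: continuous compactly supported sections. -/
def MemGammaC (B : USCBanachBundle X Fib) (f : ∀ x, Fib x) : Prop :=
  B.IsContSection f ∧ ∃ K : Set X, IsCompact K ∧ ∀ x ∉ K, f x = 0

/-- membership in `Γ₀(X;𝔅)`: continuous sections vanishing at infinity. -/
def MemGammaZero (B : USCBanachBundle X Fib) (f : ∀ x, Fib x) : Prop :=
  B.IsContSection f ∧ ∀ ε : ℝ, 0 < ε → IsCompact { x | ε ≤ ‖f x‖ }

/-- The Banach space `Γ₀(X;𝔅)` is separable: there is a countable set of sections in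
`Γ₀` which is dense for the supremum norm. -/
def SeparableGammaZero (B : USCBanachBundle X Fib) : Prop :=
  ∃ D : Set (∀ x, Fib x), D.Countable ∧ (∀ g ∈ D, B.MemGammaZero g) ∧
    ∀ f, B.MemGammaZero f → ∀ ε : ℝ, 0 < ε → ∃ g ∈ D, ∀ x, ‖f x - g x‖ < ε

/-- uniform convergence of a sequence of sections to a section. -/
def UnifTendsto (B : USCBanachBundle X Fib) (F : ℕ → ∀ x, Fib x)
    (f : ∀ x, Fib x) : Prop :=
  ∀ ε : ℝ, 0 < ε → ∃ N : ℕ, ∀ n ≥ N, ∀ x, ‖F n x - f x‖ < ε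

/-- continuity of `ν` in the inductive limit topology: `ν fₙ → ν f` whenever `fₙ → f`
uniformly with all supports contained in a fixed compact set. -/
def ILTContinuous (B : USCBanachBundle X Fib) (ν : (∀ x, Fib x) → ℂ) : Prop :=
  ∀ (F : ℕ → ∀ x, Fib x) (f : ∀ x, Fib x) (K : Set X),
    (∀ n, B.MemGammaC (F n)) → B.MemGammaC f → IsCompact K →
    (∀ n, ∀ x ∉ K, F n x = 0) → B.UnifTendsto F f →
    Filter.Tendsto (fun n => ν (F n)) Filter.atTop (nhds (ν f))

/-- a generalized Radon measure on the bundle `B`: a linear functional on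
`Γ_c(X;𝔅)` which is continuous in the inductive limit topology. -/
def IsGRM (B : USCBanachBundle X Fib) (ν : (∀ x, Fib x) → ℂ) : Prop :=
  (∀ f g, B.MemGammaC f → B.MemGammaC g →
    ν (fun x => f x + g x) = ν f + ν g) ∧
  (∀ (c : ℂ) (f), B.MemGammaC f → ν (fun x => c • f x) = c * ν f) ∧
  B.ILTContinuous ν

/-- `μ` is the total variation `|ν|` of the generalized Radon measure `ν`: a Radon
measure (Borel measure, finite on compacts) such that for every nonnegative
`φ ∈ C_c(X)`, `∫ φ dμ = sup { |ν f| : f ∈ Γ_c(X;𝔅), ‖f x‖ ≤ φ x for all x }`. -/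
def IsTotalVariation [MeasurableSpace X] (B : USCBanachBundle X Fib)
    (ν : (∀ x, Fib x) → ℂ) (μ : Measure X) : Prop :=
  (∀ K : Set X, IsCompact K → μ K < ⊤) ∧
  ∀ φ : X → ℝ, Continuous φ → HasCompactSupport φ → (∀ x, 0 ≤ φ x) →
    ∫ x, φ x ∂μ =
      sSup { r : ℝ | ∃ f, B.MemGammaC f ∧ (∀ x, ‖f x‖ ≤ φ x) ∧ r = ‖ν f‖ }

/-- membership in `Σ_c(X;𝔅)`: bounded sections which are pointwise limits (in the
topology of the total space) of a uniformly bounded sequence in `Γ_c(X;𝔅)` whose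
supports are contained in a fixed compact set. -/
def MemSigmaC (B : USCBanachBundle X Fib) (f : ∀ x, Fib x) : Prop :=
  (∃ M : ℝ, ∀ x, ‖f x‖ ≤ M) ∧
  ∃ (F : ℕ → ∀ x, Fib x) (K : Set X) (M : ℝ),
    (∀ n, B.MemGammaC (F n)) ∧ (∀ n x, ‖F n x‖ ≤ M) ∧ IsCompact K ∧
    (∀ n, ∀ x ∉ K, F n x = 0) ∧
    ∀ x, Filter.Tendsto (fun n => (⟨x, F n x⟩ : (x : X) × Fib x)) Filter.atTop
      (@nhds _ B.topTotal (⟨x, f x⟩ : (x : X) × Fib x))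

end USCBanachBundle

namespace USCBanachBundle

variable {X : Type} [TopologicalSpace X] {Fib : X → Type}
  [∀ x, NormedAddCommGroup (Fib x)] [∀ x, NormedSpace ℂ (Fib x)]
  [∀ x, CompleteSpace (Fib x)]
  (B : USCBanachBundle X Fib)

section Tendsto

variable {ι : Type} {l : Filter ι} {β : ι → X} {x : X}

lemma tendsto_mk_add {u v : ∀ i, Fib (β i)} {u₀ v₀ : Fib x}
    (hu : Tendsto (fun i => (⟨β i, u i⟩ : (x : X) × Fib x)) l (@nhds _ B.topTotal ⟨x, u₀⟩))
    (hv : Tendsto (fun i => (⟨β i, v i⟩ : (x : X) × Fib x)) l (@nhds _ B.topTotal ⟨x, v₀⟩)) :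
    Tendsto (fun i => (⟨β i, u i + v i⟩ : (x : X) × Fib x)) l
      (@nhds _ B.topTotal ⟨x, u₀ + v₀⟩) := by
  let := B.topTotal
  have hpair : Tendsto
      (fun i => (⟨(⟨β i, u i⟩, ⟨β i, v i⟩), rfl⟩ :
        { q : ((x : X) × Fib x) × ((x : X) × Fib x) // q.1.1 = q.2.1 })) l
      (𝓝 ⟨(⟨x, u₀⟩, ⟨x, v₀⟩), rfl⟩) :=
    tendsto_subtype_rng.2 (hu.prodMk_nhds hv)
  simpa only [Function.comp_def, cast_eq] using (B.continuous_add.tendsto _).comp hpair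

lemma eventually_norm_lt_of_tendsto {v : ∀ i, Fib (β i)} {w : Fib x}
    (hv : Tendsto (fun i => (⟨β i, v i⟩ : (x : X) × Fib x)) l (@nhds _ B.topTotal ⟨x, w⟩))
    {r : ℝ} (hr : ‖w‖ < r) :
    ∀ᶠ i in l, ‖v i‖ < r := by
  let := B.topTotal
  exact hv ((B.isOpen_norm_lt r).mem_nhds (show ‖(⟨x, w⟩ : (x : X) × Fib x).2‖ < r from hr))

lemma tendsto_mk_smul {v : ∀ i, Fib (β i)} {w : Fib x}
    (hv : Tendsto (fun i => (⟨β i, v i⟩ : (x : X) × Fib x)) l (@nhds _ B.topTotal ⟨x, w⟩))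
    {c : ι → ℂ} {c₀ : ℂ} (hc : Tendsto c l (𝓝 c₀)) :
    Tendsto (fun i => (⟨β i, c i • v i⟩ : (x : X) × Fib x)) l
      (@nhds _ B.topTotal ⟨x, c₀ • w⟩) := by
  let := B.topTotal
  have hβ : Tendsto β l (𝓝 x) := (B.continuous_proj.tendsto _).comp hv
  have hfixed : Tendsto (fun i => (⟨β i, c₀ • v i⟩ : (x : X) × Fib x)) l (𝓝 ⟨x, c₀ • w⟩) :=
    ((B.continuous_smul c₀).tendsto _).comp hv
  -- (B1) bounds `‖v i‖` eventually, so `(c i - c₀) • v i` is small and (B4) applies.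
  have hsmall : Tendsto (fun i => (⟨β i, (c i - c₀) • v i⟩ : (x : X) × Fib x)) l
      (𝓝 ⟨x, 0⟩) := by
    refine B.tendsto_zero l _ x hβ ?_
    have hc' : Tendsto (fun i => ‖c i - c₀‖ * (‖w‖ + 1)) l (𝓝 0) := by
      simpa using (tendsto_sub_nhds_zero_iff.2 hc).norm.mul_const (‖w‖ + 1)
    refine squeeze_zero' (.of_forall fun i => norm_nonneg _) ?_ hc'
    filter_upwards [B.eventually_norm_lt_of_tendsto hv (lt_add_one ‖w‖)] with i hi
    rw [norm_smul]
    exact mul_le_mul_of_nonneg_left hi.le (norm_nonneg _)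
  convert B.tendsto_mk_add hfixed hsmall using 3 <;> simp [← add_smul]

end Tendsto

variable {B}

lemma IsContSection.smul {g : ∀ x, Fib x} (hg : B.IsContSection g) {h : X → ℂ}
    (hh : Continuous h) : B.IsContSection fun x => h x • g x := by
  let := B.topTotal
  exact continuous_iff_continuousAt.2 fun x₀ =>
    B.tendsto_mk_smul (β := id) (hg.tendsto x₀) (hh.tendsto x₀)

lemma MemGammaC.smul {g : ∀ x, Fib x} (hg : B.MemGammaC g) {h : X → ℂ}
    (hh : Continuous h) : B.MemGammaC fun x => h x • g x := by
  obtain ⟨hcont, K, hK, hgK⟩ := hg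
  exact ⟨hcont.smul hh, K, hK, fun x hx => by simp [hgK x hx]⟩

lemma MemSigmaC.smul_of_tendsto {f : ∀ x, Fib x} (hf : B.MemSigmaC f) {t : X → ℂ}
    {tk : ℕ → X → ℂ} {C : ℝ} (htk_cont : ∀ k, Continuous (tk k))
    (htk_bdd : ∀ k x, ‖tk k x‖ ≤ C) (htk_lim : ∀ x, Tendsto (fun k => tk k x) atTop (𝓝 (t x))) :
    B.MemSigmaC fun x => t x • f x := by
  obtain ⟨⟨Mf, hMf⟩, F, K, M, hF, hFM, hK, hFK, hFlim⟩ := hf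
  have ht_bdd : ∀ x, ‖t x‖ ≤ C := fun x =>
    le_of_tendsto (htk_lim x).norm (.of_forall fun k => htk_bdd k x)
  have hC : ∀ x, 0 ≤ C := fun x => (norm_nonneg _).trans (ht_bdd x)
  refine ⟨⟨C * Mf, fun x => ?_⟩, fun k x => tk k x • F k x, K, C * M,
    fun k => (hF k).smul (htk_cont k), fun k x => ?_, hK, fun k x hx => ?_,
    fun x => B.tendsto_mk_smul (hFlim x) (htk_lim x)⟩
  · rw [norm_smul]
    exact mul_le_mul (ht_bdd x) (hMf x) (norm_nonneg _) (hC x)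
  · rw [norm_smul]
    exact mul_le_mul (htk_bdd k x) (hFM k x) (norm_nonneg _) (hC x)
  · simp [hFK k x hx]

lemma MemSigmaC.ofReal_smul_of_tendsto {f : ∀ x, Fib x} (hf : B.MemSigmaC f) {t : X → ℝ}
    {tk : ℕ → X → ℝ} (htk_cont : ∀ k, Continuous (tk k)) (htk_mem : ∀ k x, tk k x ∈ Icc 0 1)
    (htk_lim : ∀ x, Tendsto (fun k => tk k x) atTop (𝓝 (t x))) :
    B.MemSigmaC fun x => (t x : ℂ) • f x :=
  hf.smul_of_tendsto (tk := fun k x => tk k x) (C := 1)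
    (fun k => Complex.continuous_ofReal.comp (htk_cont k))
    (fun k x => by
      rw [Complex.norm_real, Real.norm_of_nonneg (htk_mem k x).1]
      exact (htk_mem k x).2)
    (fun x => (htk_lim x).ofReal)

end USCBanachBundle

lemma exists_continuous_tendsto_div {X : Type} [TopologicalSpace X] {u v : X → ℝ}
    {uk : ℕ → X → ℝ} (huk_cont : ∀ k, Continuous (uk k)) (hv_cont : Continuous v)
    (huk_nonneg : ∀ k x, 0 ≤ uk k x) (huk_le : ∀ k x, uk k x ≤ v x)
    (huk_lim : ∀ x, Tendsto (fun k => uk k x) atTop (𝓝 (u x))) :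
    ∃ sk : ℕ → X → ℝ, (∀ k, Continuous (sk k)) ∧ (∀ k x, sk k x ∈ Icc 0 1) ∧
      ∀ x, Tendsto (fun k => sk k x) atTop (𝓝 (u x / v x)) := by
  have hden_pos : ∀ (k : ℕ) x, 0 < max (v x) (1 / (k + 1)) := fun k x =>
    lt_max_of_lt_right Nat.one_div_pos_of_nat
  refine ⟨fun k x => uk k x / max (v x) (1 / (k + 1)), fun k => ?_, fun k x => ⟨?_, ?_⟩,
    fun x => ?_⟩
  · exact (huk_cont k).div (hv_cont.max continuous_const) fun x => (hden_pos k x).ne'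
  · exact div_nonneg (huk_nonneg k x) (hden_pos k x).le
  · exact (div_le_one (hden_pos k x)).2 ((huk_le k x).trans (le_max_left _ _))
  by_cases hv : v x = 0
  · have huk_zero : ∀ k, uk k x = 0 := fun k => le_antisymm (hv ▸ huk_le k x) (huk_nonneg k x)
    simp [hv, huk_zero]
  · have hv_nonneg : 0 ≤ v x := (huk_nonneg 0 x).trans (huk_le 0 x)
    have hden : Tendsto (fun k : ℕ => max (v x) (1 / (k + 1))) atTop (𝓝 (v x)) := by
      simpa [max_eq_left hv_nonneg] using
        (tendsto_const_nhds (x := v x)).max tendsto_one_div_add_atTop_nhds_zero_nat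
    exact (huk_lim x).div hden hv

lemma div_mul_le_of_le {a b r : ℝ} (ha : 0 ≤ a) (hr : 0 ≤ r) (hrb : r ≤ b) :
    a / b * r ≤ a := by
  rcases (hr.trans hrb).eq_or_lt with hb | hb
  · simp [← hb, ha]
  · calc a / b * r ≤ a / b * b := by gcongr
      _ = a := div_mul_cancel₀ a hb.ne'

lemma one_sub_div_mul_le_sub {a b r : ℝ} (ha : 0 ≤ a) (hab : a ≤ b) (hr : 0 ≤ r) (hrb : r ≤ b) :
    (1 - a / b) * r ≤ b - a := by
  rcases (hr.trans hrb).eq_or_lt with hb | hb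
  · have ha0 : a = 0 := le_antisymm (hab.trans hb.ge) ha
    have hr0 : r = 0 := le_antisymm (hrb.trans hb.ge) hr
    simp [← hb, ha0, hr0]
  · have hsub : 0 ≤ 1 - a / b := sub_nonneg.2 (div_le_one_of_le₀ hab hb.le)
    calc (1 - a / b) * r ≤ (1 - a / b) * b := by gcongr
      _ = b - a := by rw [sub_mul, one_mul, div_mul_cancel₀ a hb.ne']

theorem USCBanachBundle.sigma_c_split_general
    {G : Type} [TopologicalSpace G]
    {Fib : G → Type}
    [∀ x, NormedAddCommGroup (Fib x)] [∀ x, NormedSpace ℂ (Fib x)]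
    [∀ x, CompleteSpace (Fib x)]
    (B : USCBanachBundle G Fib)
    (φ : G → ℝ)
    (φseq : ℕ → G → ℝ)
    (hφseq_cont : ∀ n, Continuous (φseq n))
    (hφseq_nonneg : ∀ n x, 0 ≤ φseq n x)
    (hφseq_anti : ∀ x, Antitone fun n => φseq n x)
    (hφseq_lim : ∀ x, Filter.Tendsto (fun n => φseq n x) Filter.atTop (nhds (φ x)))
    (n : ℕ) (f : ∀ x, Fib x) (hf : B.MemSigmaC f)
    (hfle : ∀ x, ‖f x‖ ≤ φseq n x) :
    ∃ f₁ f₂ : ∀ x, Fib x, B.MemSigmaC f₁ ∧ B.MemSigmaC f₂ ∧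
      (∀ x, f x = f₁ x + f₂ x) ∧
      (∀ x, ‖f₁ x‖ ≤ φ x) ∧ (∀ x, ‖f₂ x‖ ≤ φseq n x - φ x) := by
  have hφ_nonneg : ∀ x, 0 ≤ φ x := fun x =>
    ge_of_tendsto' (hφseq_lim x) fun k => hφseq_nonneg k x
  have hφ_le : ∀ x, φ x ≤ φseq n x := fun x =>
    le_of_tendsto (hφseq_lim x) (eventually_atTop.2 ⟨n, fun k hk => hφseq_anti x hk⟩)
  obtain ⟨sk, hsk_cont, hsk_mem, hsk_lim⟩ := exists_continuous_tendsto_div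
    (uk := fun k => φseq (k + n)) (fun k => hφseq_cont _) (hφseq_cont n)
    (fun k => hφseq_nonneg _) (fun k x => hφseq_anti x (Nat.le_add_left n k))
    (fun x => (hφseq_lim x).comp (tendsto_add_atTop_nat n))
  set s : G → ℝ := fun x => φ x / φseq n x
  have hs_mem : ∀ x, s x ∈ Icc 0 1 := fun x =>
    ⟨div_nonneg (hφ_nonneg x) (hφseq_nonneg n x), div_le_one_of_le₀ (hφ_le x) (hφseq_nonneg n x)⟩
  refine ⟨fun x => (s x : ℂ) • f x, fun x => ((1 - s x : ℝ) : ℂ) • f x,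
    hf.ofReal_smul_of_tendsto hsk_cont hsk_mem hsk_lim,
    hf.ofReal_smul_of_tendsto (fun k => continuous_const.sub (hsk_cont k))
      (fun k x => Icc.mem_iff_one_sub_mem.1 (hsk_mem k x))
      (fun x => tendsto_const_nhds.sub (hsk_lim x)),
    fun x => ?_, fun x => ?_, fun x => ?_⟩
  · rw [← add_smul, Complex.ofReal_sub, Complex.ofReal_one, add_sub_cancel, one_smul]
  · rw [norm_smul, Complex.norm_real, Real.norm_of_nonneg (hs_mem x).1]
    exact div_mul_le_of_le (hφ_nonneg x) (norm_nonneg _) (hfle x)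
  · rw [norm_smul, Complex.norm_real, Real.norm_of_nonneg (sub_nonneg.2 (hs_mem x).2)]
    exact one_sub_div_mul_le_sub (hφ_nonneg x) (hφ_le x) (norm_nonneg _) (hfle x)

/-- Lemma 3.10 of the paper: if `φₙ ∈ C_c(G)⁺` decrease pointwise to
the Borel function `φ` and `f ∈ Σ_c(G;𝔅)` satisfies `‖f x‖ ≤ φₙ x` for a fixed `n`,
then `f` splits as `f = f₁ + f₂` with `f₁, f₂ ∈ Σ_c(G;𝔅)`, `‖f₁ x‖ ≤ φ x` and
`‖f₂ x‖ ≤ φₙ x - φ x` for all `x`. -/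
theorem USCBanachBundle.sigma_c_split
    {G : Type} [TopologicalSpace G] [SecondCountableTopology G]
    [LocallyCompactSpace G] [T2Space G]
    [MeasurableSpace G] [BorelSpace G]
    {Fib : G → Type}
    [∀ x, NormedAddCommGroup (Fib x)] [∀ x, NormedSpace ℂ (Fib x)]
    [∀ x, CompleteSpace (Fib x)]
    (B : USCBanachBundle G Fib)
    (φ : G → ℝ) (hφ_borel : Measurable φ)
    (φseq : ℕ → G → ℝ)
    (hφseq_cont : ∀ n, Continuous (φseq n))
    (hφseq_supp : ∀ n, HasCompactSupport (φseq n))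
    (hφseq_nonneg : ∀ n x, 0 ≤ φseq n x)
    (hφseq_anti : ∀ x, Antitone fun n => φseq n x)
    (hφseq_lim : ∀ x, Filter.Tendsto (fun n => φseq n x) Filter.atTop (nhds (φ x)))
    (n : ℕ) (f : ∀ x, Fib x) (hf : B.MemSigmaC f)
    (hfle : ∀ x, ‖f x‖ ≤ φseq n x) :
    ∃ f₁ f₂ : ∀ x, Fib x, B.MemSigmaC f₁ ∧ B.MemSigmaC f₂ ∧
      (∀ x, f x = f₁ x + f₂ x) ∧
      (∀ x, ‖f₁ x‖ ≤ φ x) ∧ (∀ x, ‖f₂ x‖ ≤ φseq n x - φ x) :=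
  USCBanachBundle.sigma_c_split_general B φ φseq hφseq_cont hφseq_nonneg hφseq_anti hφseq_lim n f hf
    hfle
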